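/- Let a ∈ L^∞(ℝ) have finite limits a₋ = lim_{y→−∞} a(y) and a₊ = lim_{y→+∞} a(y). Then for each x₀ ∈ ℝ, the matrix-valued function γ^a(x₁,x₂) = ∫_ℝ a((−x₁+y)/(2√x₂)) H(y)[H(y)]^T dy on Π = ℝ × (0,∞) satisfies lim_{(x₁,x₂)→(x₀,0⁺)} γ^a(x₁,x₂) = a₋ · ∫_{−∞}^{x₀} H(y)[H(y)]^T dy + a₊ · ∫_{x₀}^{+∞} H(y)[H(y)]^T dy, the limit being taken over (x₁,x₂) ∈ ℝ × (0,∞) with x₁ → x₀ and x₂ → 0⁺. -/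

import Mathlib

/-!
Writing `γ^a(x₁,x₂)_{jk} = ∫ a((y − x₁)/(2√x₂)) h_j(y) h_k(y) dy`, the argument of `a` tends to
`−∞` for `y < x₀` and to `+∞` for `y > x₀` as `x₁ → x₀`, `x₂ → 0⁺`. Since `a` is bounded and
`h_j h_k` is a polynomial times `e^{−y²}`, hence integrable, dominated convergence on
`(−∞, x₀)` and on `(x₀, ∞)` gives the limit.
-/

open MeasureTheory Filter Topology

noncomputable section

/-- The physicists' Hermite polynomial `H_m(y) = (−1)^m e^{y²} (d/dy)^m e^{−y²}`. -/
def hermiteH (m : ℕ) (y : ℝ) : ℝ :=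
  (-1 : ℝ) ^ m * Real.exp (y ^ 2) * iteratedDeriv m (fun x => Real.exp (-x ^ 2)) y

/-- The Hermite function `h_m(y) = (2^m m! √π)^{−1/2} H_m(y) e^{−y²/2}`. -/
def hermiteFun (m : ℕ) (y : ℝ) : ℝ :=
  (Real.sqrt (2 ^ m * m.factorial * Real.sqrt Real.pi))⁻¹ * hermiteH m y *
    Real.exp (-y ^ 2 / 2)

/-- The matrix `H(y)[H(y)]ᵀ`, where `H(y) = (h_0(y), …, h_{n−1}(y))ᵀ`. -/
def HHT (n : ℕ) (y : ℝ) : Matrix (Fin n) (Fin n) ℝ :=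
  Matrix.of fun j k : Fin n => hermiteFun j y * hermiteFun k y

/-- `γ^a(x₁,x₂) = ∫_ℝ a((−x₁+y)/(2√x₂)) H(y)[H(y)]ᵀ dy` as a complex `n × n` matrix. -/
def gammaA (n : ℕ) (a : ℝ → ℂ) (x₁ x₂ : ℝ) : Matrix (Fin n) (Fin n) ℂ :=
  Matrix.of fun j k : Fin n =>
    ∫ y : ℝ, a ((-x₁ + y) / (2 * Real.sqrt x₂)) * (HHT n y j k : ℂ)

open Polynomial

theorem exists_iteratedDeriv_exp_neg_sq_eq (m : ℕ) : ∃ p : ℝ[X], ∀ y : ℝ,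
    iteratedDeriv m (fun x => Real.exp (-x ^ 2)) y = p.eval y * Real.exp (-y ^ 2) := by
  induction m with
  | zero => exact ⟨1, fun y => by simp⟩
  | succ m ih =>
    obtain ⟨p, hp⟩ := ih
    refine ⟨derivative p - C 2 * X * p, fun y => ?_⟩
    have hderiv : HasDerivAt (fun x => p.eval x * Real.exp (-x ^ 2))
        (p.derivative.eval y * Real.exp (-y ^ 2) +
          p.eval y * (Real.exp (-y ^ 2) * -(2 * y))) y :=
      (p.hasDerivAt y).mul ((hasDerivAt_pow 2 y).neg.congr_deriv (by norm_num)).exp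
    rw [iteratedDeriv_succ, funext hp, hderiv.deriv]
    simp only [eval_sub, eval_mul, eval_C, eval_X]
    ring

theorem exists_hermiteH_eq_eval (m : ℕ) : ∃ p : ℝ[X], ∀ y : ℝ, hermiteH m y = p.eval y := by
  obtain ⟨p, hp⟩ := exists_iteratedDeriv_exp_neg_sq_eq m
  refine ⟨C ((-1) ^ m) * p, fun y => ?_⟩
  have hexp : Real.exp (y ^ 2) * Real.exp (-y ^ 2) = 1 := by rw [← Real.exp_add]; simp
  simp only [hermiteH, hp, eval_mul, eval_C]
  linear_combination (-1) ^ m * p.eval y * hexp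

theorem exists_HHT_apply_eq (n : ℕ) (j k : Fin n) : ∃ q : ℝ[X], ∀ y : ℝ,
    HHT n y j k = q.eval y * Real.exp (-y ^ 2) := by
  obtain ⟨pj, hj⟩ := exists_hermiteH_eq_eval j
  obtain ⟨pk, hk⟩ := exists_hermiteH_eq_eval k
  refine ⟨C ((Real.sqrt (2 ^ (j : ℕ) * (j : ℕ).factorial * Real.sqrt Real.pi))⁻¹ *
    (Real.sqrt (2 ^ (k : ℕ) * (k : ℕ).factorial * Real.sqrt Real.pi))⁻¹) * pj * pk,
    fun y => ?_⟩
  have hexp : Real.exp (-y ^ 2 / 2) * Real.exp (-y ^ 2 / 2) = Real.exp (-y ^ 2) := by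
    rw [← Real.exp_add]; ring_nf
  simp only [HHT, hermiteFun, Matrix.of_apply, hj, hk, eval_mul, eval_C, ← hexp]
  ring

theorem integrable_pow_mul_exp_neg_mul_sq {b : ℝ} (hb : 0 < b) (k : ℕ) :
    Integrable fun x : ℝ => x ^ k * Real.exp (-b * x ^ 2) := by
  simpa only [Real.rpow_natCast] using
    integrable_rpow_mul_exp_neg_mul_sq hb (s := k) (by linarith [k.cast_nonneg (α := ℝ)])

theorem Polynomial.integrable_eval_mul_exp_neg_mul_sq {b : ℝ} (hb : 0 < b) (p : ℝ[X]) :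
    Integrable fun x : ℝ => p.eval x * Real.exp (-b * x ^ 2) := by
  simp only [eval_eq_sum_range, Finset.sum_mul, mul_assoc]
  exact integrable_finsetSum _ fun i _ =>
    (integrable_pow_mul_exp_neg_mul_sq hb i).const_mul _

theorem integrable_HHT_apply (n : ℕ) (j k : Fin n) : Integrable fun y => HHT n y j k := by
  obtain ⟨q, hq⟩ := exists_HHT_apply_eq n j k
  simpa only [hq, neg_mul, one_mul] using q.integrable_eval_mul_exp_neg_mul_sq one_pos

theorem tendsto_setIntegral_mul_of_tendsto {𝕜 α ι : Type*} [RCLike 𝕜] [MeasurableSpace α]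
    {μ : Measure α} {l : Filter ι} [l.IsCountablyGenerated] {S : Set α} (hS : MeasurableSet S)
    {g : ι → α → 𝕜} {f : α → 𝕜} {L : 𝕜} {C : ℝ} (hg_meas : ∀ p, AEStronglyMeasurable (g p) μ)
    (hg_bdd : ∀ p y, ‖g p y‖ ≤ C) (hf : Integrable f μ)
    (hlim : ∀ y ∈ S, Tendsto (fun p => g p y) l (𝓝 L)) :
    Tendsto (fun p => ∫ y in S, g p y * f y ∂μ) l (𝓝 (L * ∫ y in S, f y ∂μ)) := by
  rw [← integral_const_mul]
  refine tendsto_integral_filter_of_dominated_convergence (fun y => C * ‖f y‖)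
    (.of_forall fun p => ((hg_meas p).mul hf.aestronglyMeasurable).restrict)
    (.of_forall fun p => .of_forall fun y => ?_) (hf.norm.const_mul C).restrict ?_
  · rw [norm_mul]
    exact mul_le_mul_of_nonneg_right (hg_bdd p y) (norm_nonneg _)
  · filter_upwards [ae_restrict_mem hS] with y hy
    exact (hlim y hy).mul_const (f y)

theorem tendsto_div_atBot_of_lt {ι : Type*} {l : Filter ι} {u s : ι → ℝ} {d : ℝ} (hd : d < 0)
    (hu : Tendsto u l (𝓝 d)) (hs : Tendsto s l (𝓝[>] 0)) :
    Tendsto (fun p => u p / s p) l atBot := by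
  simpa only [div_eq_mul_inv, Function.comp_def] using
    hu.neg_mul_atTop hd (tendsto_inv_nhdsGT_zero.comp hs)

theorem tendsto_div_atTop_of_pos {ι : Type*} {l : Filter ι} {u s : ι → ℝ} {d : ℝ} (hd : 0 < d)
    (hu : Tendsto u l (𝓝 d)) (hs : Tendsto s l (𝓝[>] 0)) :
    Tendsto (fun p => u p / s p) l atTop := by
  simpa only [div_eq_mul_inv, Function.comp_def] using
    hu.pos_mul_atTop hd (tendsto_inv_nhdsGT_zero.comp hs)

theorem tendsto_integral_comp_sub_div_mul {𝕜 ι : Type*} [RCLike 𝕜] {l : Filter ι}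
    [l.IsCountablyGenerated] {a f : ℝ → 𝕜} {c s : ι → ℝ} {aminus aplus : 𝕜} {x₀ C : ℝ}
    (ha : Measurable a) (ha_bdd : ∀ y, ‖a y‖ ≤ C) (haminus : Tendsto a atBot (𝓝 aminus))
    (haplus : Tendsto a atTop (𝓝 aplus)) (hf : Integrable f) (hc : Tendsto c l (𝓝 x₀))
    (hs : Tendsto s l (𝓝[>] 0)) :
    Tendsto (fun p => ∫ y, a ((y - c p) / s p) * f y) l
      (𝓝 ((aminus * ∫ y in Set.Iic x₀, f y) + aplus * ∫ y in Set.Ioi x₀, f y)) := by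
  have hg_meas : ∀ p, AEStronglyMeasurable (fun y => a ((y - c p) / s p)) :=
    fun p => (ha.comp ((measurable_id.sub_const _).div_const _)).aestronglyMeasurable
  have hsplit : ∀ p, ∫ y, a ((y - c p) / s p) * f y =
      (∫ y in Set.Iio x₀, a ((y - c p) / s p) * f y) +
        ∫ y in Set.Ioi x₀, a ((y - c p) / s p) * f y := fun p => by
    have hint := hf.bdd_mul (hg_meas p) (.of_forall fun y => ha_bdd _)
    rw [← integral_Iic_eq_integral_Iio,
      intervalIntegral.integral_Iic_add_Ioi hint.integrableOn hint.integrableOn]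
  simp only [hsplit, integral_Iic_eq_integral_Iio]
  have hleft : Tendsto (fun p => ∫ y in Set.Iio x₀, a ((y - c p) / s p) * f y) l
      (𝓝 (aminus * ∫ y in Set.Iio x₀, f y)) :=
    tendsto_setIntegral_mul_of_tendsto measurableSet_Iio hg_meas (fun p y => ha_bdd _) hf
      fun y hy => haminus.comp <|
        tendsto_div_atBot_of_lt (sub_neg.2 hy) (tendsto_const_nhds.sub hc) hs
  have hright : Tendsto (fun p => ∫ y in Set.Ioi x₀, a ((y - c p) / s p) * f y) l
      (𝓝 (aplus * ∫ y in Set.Ioi x₀, f y)) :=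
    tendsto_setIntegral_mul_of_tendsto measurableSet_Ioi hg_meas (fun p y => ha_bdd _) hf
      fun y hy => haplus.comp <|
        tendsto_div_atTop_of_pos (sub_pos.2 hy) (tendsto_const_nhds.sub hc) hs
  exact hleft.add hright

theorem tendsto_two_mul_sqrt_nhdsGT_zero :
    Tendsto (fun x => 2 * Real.sqrt x) (𝓝[>] 0) (𝓝[>] 0) := by
  refine tendsto_nhdsWithin_of_tendsto_nhds_of_eventually_within _ ?_ ?_
  · simpa using ((Real.continuous_sqrt.tendsto 0).const_mul 2).mono_left nhdsWithin_le_nhds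
  · filter_upwards [self_mem_nhdsWithin] with x hx
    exact mul_pos two_pos (Real.sqrt_pos.2 hx)

theorem gammaA_limit_at_boundary_general (n : ℕ) (a : ℝ → ℂ)
    (ha_meas : Measurable a) (ha_bdd : ∃ C : ℝ, ∀ y : ℝ, ‖a y‖ ≤ C)
    (aminus aplus : ℂ)
    (haminus : Tendsto a atBot (𝓝 aminus)) (haplus : Tendsto a atTop (𝓝 aplus))
    (x₀ : ℝ) :
    Tendsto (fun p : ℝ × ℝ => gammaA n a p.1 p.2) (𝓝 x₀ ×ˢ 𝓝[>] (0 : ℝ))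
      (𝓝 (aminus • Matrix.of (fun j k : Fin n =>
              ((∫ y in Set.Iic x₀, HHT n y j k : ℝ) : ℂ)) +
            aplus • Matrix.of (fun j k : Fin n =>
              ((∫ y in Set.Ioi x₀, HHT n y j k : ℝ) : ℂ)))) := by
  obtain ⟨C, hC⟩ := ha_bdd
  refine tendsto_pi_nhds.2 fun j => tendsto_pi_nhds.2 fun k => ?_
  have hjk := tendsto_integral_comp_sub_div_mul ha_meas hC haminus haplus
    (integrable_HHT_apply n j k).ofReal (tendsto_fst (f := 𝓝 x₀))
    (tendsto_two_mul_sqrt_nhdsGT_zero.comp tendsto_snd)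
  simp only [integral_ofReal] at hjk
  simp only [gammaA, Matrix.of_apply, Matrix.add_apply, Matrix.smul_apply, smul_eq_mul,
    neg_add_eq_sub]
  exact hjk

/-- If `a ∈ L^∞(ℝ)` has limits `a₋` at `−∞` and `a₊` at `+∞`, then for
every `x₀ ∈ ℝ`, `γ^a(x₁,x₂) → a₋ ∫_{−∞}^{x₀} H Hᵀ + a₊ ∫_{x₀}^{∞} H Hᵀ` as
`x₁ → x₀` and `x₂ → 0⁺`. -/
theorem gammaA_limit_at_boundary (n : ℕ) (hn : 1 ≤ n) (a : ℝ → ℂ)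
    (ha_meas : Measurable a) (ha_bdd : ∃ C : ℝ, ∀ y : ℝ, ‖a y‖ ≤ C)
    (aminus aplus : ℂ)
    (haminus : Tendsto a atBot (𝓝 aminus)) (haplus : Tendsto a atTop (𝓝 aplus))
    (x₀ : ℝ) :
    Tendsto (fun p : ℝ × ℝ => gammaA n a p.1 p.2) (𝓝 x₀ ×ˢ 𝓝[>] (0 : ℝ))
      (𝓝 (aminus • Matrix.of (fun j k : Fin n =>
              ((∫ y in Set.Iic x₀, HHT n y j k : ℝ) : ℂ)) +
            aplus • Matrix.of (fun j k : Fin n =>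
              ((∫ y in Set.Ioi x₀, HHT n y j k : ℝ) : ℂ)))) :=
  gammaA_limit_at_boundary_general n a ha_meas ha_bdd aminus aplus haminus haplus x₀
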